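/- arXiv:1911.11436 — 2 statements merged into one kernel-verified Lean document; each statement's English description precedes it below -/
import Mathlib

section
/- A subset A of a generalized topological space is sλ-open if and only if A = N ∪ H for some s∨_μ-set N and sμ-open set H, if and only if A = sA_μ^∨ ∪ sInt_μ(A). -/
open Set

variable {X : Type*}

def IsGT (μ : Set (Set X)) : Prop :=
  ∅ ∈ μ ∧ ∀ S : Set (Set X), S ⊆ μ → ⋃₀ S ∈ μ

def muInt (μ : Set (Set X)) (A : Set X) : Set X := ⋃₀ {U | U ∈ μ ∧ U ⊆ A}

def muCl (μ : Set (Set X)) (A : Set X) : Set X := ⋂₀ {F | Fᶜ ∈ μ ∧ A ⊆ F}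

def sOpen (μ : Set (Set X)) (A : Set X) : Prop := A ⊆ muCl μ (muInt μ A)

def sClosed (μ : Set (Set X)) (A : Set X) : Prop := sOpen μ Aᶜ

def sInt (μ : Set (Set X)) (A : Set X) : Set X := ⋃₀ {U | sOpen μ U ∧ U ⊆ A}

def sCl (μ : Set (Set X)) (A : Set X) : Set X := ⋂₀ {F | sClosed μ F ∧ A ⊆ F}

def sWedge (μ : Set (Set X)) (A : Set X) : Set X := ⋂₀ {U | sOpen μ U ∧ A ⊆ U}

def sVee (μ : Set (Set X)) (A : Set X) : Set X := ⋃₀ {F | sClosed μ F ∧ F ⊆ A}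

def sLambdaClosed (μ : Set (Set X)) (A : Set X) : Prop :=
  ∃ K P : Set X, K = sWedge μ K ∧ sClosed μ P ∧ A = K ∩ P

def sLambdaOpen (μ : Set (Set X)) (A : Set X) : Prop := sLambdaClosed μ Aᶜ

def sclL (μ : Set (Set X)) (A : Set X) : Set X := ⋂₀ {F | sLambdaClosed μ F ∧ A ⊆ F}

def sIntL (μ : Set (Set X)) (A : Set X) : Set X := ⋃₀ {U | sLambdaOpen μ U ∧ U ⊆ A}

def sWedgeL (μ : Set (Set X)) (A : Set X) : Set X := ⋂₀ {U | sLambdaOpen μ U ∧ A ⊆ U}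

def sVeeL (μ : Set (Set X)) (A : Set X) : Set X := ⋃₀ {F | sLambdaClosed μ F ∧ F ⊆ A}

def sgClosed (μ : Set (Set X)) (A : Set X) : Prop :=
  ∀ U : Set X, sLambdaOpen μ U → A ⊆ U → sclL μ A ⊆ U

def sgOpen (μ : Set (Set X)) (A : Set X) : Prop := sgClosed μ Aᶜ

def sBetaClosed (μ : Set (Set X)) (A : Set X) : Prop :=
  ∃ H Q : Set X, H = sWedgeL μ H ∧ sLambdaClosed μ Q ∧ A = H ∩ Q

def sT0 (μ : Set (Set X)) : Prop :=
  ∀ x y : X, x ≠ y → ∃ U : Set X, sLambdaOpen μ U ∧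
    ((x ∈ U ∧ y ∉ U) ∨ (y ∈ U ∧ x ∉ U))

def sT1 (μ : Set (Set X)) : Prop :=
  ∀ x y : X, x ≠ y → ∃ U V : Set X, sLambdaOpen μ U ∧ sLambdaOpen μ V ∧
    x ∈ U ∧ y ∉ U ∧ y ∈ V ∧ x ∉ V


lemma muInt_mono (μ : Set (Set X)) {A B : Set X} (h : A ⊆ B) : muInt μ A ⊆ muInt μ B := by
  intro x hx
  obtain ⟨U, ⟨hU, hUA⟩, hxU⟩ := hx
  exact ⟨U, ⟨hU, hUA.trans h⟩, hxU⟩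

lemma muCl_mono (μ : Set (Set X)) {A B : Set X} (h : A ⊆ B) : muCl μ A ⊆ muCl μ B := by
  intro x hx F ⟨hF, hBF⟩
  exact hx F ⟨hF, h.trans hBF⟩

lemma sOpen_sUnion (μ : Set (Set X)) (S : Set (Set X)) (h : ∀ U ∈ S, sOpen μ U) :
    sOpen μ (⋃₀ S) := by
  intro x hx
  obtain ⟨U, hU, hxU⟩ := hx
  exact muCl_mono μ (muInt_mono μ (subset_sUnion_of_mem hU)) (h U hU hxU)

lemma sOpen_sInt (μ : Set (Set X)) (A : Set X) : sOpen μ (sInt μ A) :=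
  sOpen_sUnion μ _ (fun _ hU => hU.1)

lemma sVee_subset (μ : Set (Set X)) (A : Set X) : sVee μ A ⊆ A := by
  intro x hx
  obtain ⟨F, ⟨_, hFA⟩, hxF⟩ := hx
  exact hFA hxF

lemma sVee_mono (μ : Set (Set X)) {A B : Set X} (h : A ⊆ B) : sVee μ A ⊆ sVee μ B := by
  intro x hx
  obtain ⟨F, ⟨hF, hFA⟩, hxF⟩ := hx
  exact ⟨F, ⟨hF, hFA.trans h⟩, hxF⟩

lemma sVee_idem (μ : Set (Set X)) (A : Set X) : sVee μ A = sVee μ (sVee μ A) := by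
  apply Set.Subset.antisymm
  · intro x hx
    obtain ⟨F, ⟨hF, hFA⟩, hxF⟩ := hx
    exact ⟨F, ⟨hF, fun y hy => ⟨F, ⟨hF, hFA⟩, hy⟩⟩, hxF⟩
  · exact sVee_subset μ _

lemma sVee_compl (μ : Set (Set X)) (A : Set X) : sVee μ Aᶜ = (sWedge μ A)ᶜ := by
  ext x
  simp only [sVee, sWedge, Set.mem_sUnion, Set.mem_compl_iff, Set.mem_sInter, not_forall,
    Set.mem_setOf_eq]
  constructor
  · rintro ⟨F, ⟨hF, hFA⟩, hxF⟩
    refine ⟨Fᶜ, ⟨?_, Set.subset_compl_comm.mp hFA⟩, fun h => h hxF⟩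
    simpa [sClosed] using hF
  · rintro ⟨U, ⟨hU, hAU⟩, hxU⟩
    exact ⟨Uᶜ, ⟨by simpa [sClosed] using hU, Set.compl_subset_compl.mpr hAU⟩, hxU⟩

theorem stmt7 (μ : Set (Set X)) (hμ : IsGT μ) (A : Set X) :
    (sLambdaOpen μ A ↔ ∃ N H : Set X, N = sVee μ N ∧ sOpen μ H ∧ A = N ∪ H) ∧
    (sLambdaOpen μ A ↔ A = sVee μ A ∪ sInt μ A) := by
  have key : sLambdaOpen μ A ↔ ∃ N H : Set X, N = sVee μ N ∧ sOpen μ H ∧ A = N ∪ H := by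
    constructor
    · rintro ⟨K, P, hK, hP, hA⟩
      refine ⟨Kᶜ, Pᶜ, ?_, hP, ?_⟩
      · rw [sVee_compl, ← hK]
      · rw [← compl_compl A, hA, Set.compl_inter]
    · rintro ⟨N, H, hN, hH, hA⟩
      refine ⟨Nᶜ, Hᶜ, ?_, by simpa [sClosed] using hH, by rw [hA, Set.compl_union]⟩
      rw [← compl_compl (sWedge μ Nᶜ), ← sVee_compl, compl_compl, ← hN]
  refine ⟨key, key.trans ⟨?_, ?_⟩⟩
  · rintro ⟨N, H, hN, hH, hA⟩
    apply Set.Subset.antisymm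
    · intro x hx
      rcases hA ▸ hx with hxN | hxH
      · exact Or.inl (sVee_mono μ (fun y hy => hA ▸ (Or.inl hy : y ∈ N ∪ H)) (hN ▸ hxN))
      · exact Or.inr ⟨H, ⟨hH, fun y hy => hA ▸ (Or.inr hy : y ∈ N ∪ H)⟩, hxH⟩
    · exact Set.union_subset (sVee_subset μ A)
        (fun x hx => by obtain ⟨U, ⟨_, hUA⟩, hxU⟩ := hx; exact hUA hxU)
  · intro h
    exact ⟨sVee μ A, sInt μ A, sVee_idem μ A, sOpen_sInt μ A, h⟩
end

section
/- A subset A of a generalized topological space is sλ-closed if and only if A is both sg_λ-closed and sβ_λ-closed. -/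
open Set

variable {X : Type*}

lemma sOpen_iUnion (μ : Set (Set X)) {ι : Sort*} {f : ι → Set X}
    (h : ∀ i, sOpen μ (f i)) : sOpen μ (⋃ i, f i) := by
  intro x hx
  obtain ⟨_, ⟨i, rfl⟩, hxi⟩ := hx
  exact muCl_mono μ (muInt_mono μ (subset_iUnion f i)) (h i hxi)

lemma sClosed_iInter (μ : Set (Set X)) {ι : Sort*} {f : ι → Set X}
    (h : ∀ i, sClosed μ (f i)) : sClosed μ (⋂ i, f i) := by
  unfold sClosed
  rw [compl_iInter]
  exact sOpen_iUnion μ h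

lemma subset_sWedge (μ : Set (Set X)) (A : Set X) : A ⊆ sWedge μ A :=
  fun x hx U hU => hU.2 hx

lemma sWedge_mono (μ : Set (Set X)) {A B : Set X} (h : A ⊆ B) :
    sWedge μ A ⊆ sWedge μ B := by
  intro x hx U hU
  exact hx U ⟨hU.1, h.trans hU.2⟩

lemma sLambdaClosed_sInter (μ : Set (Set X)) {S : Set (Set X)}
    (h : ∀ A ∈ S, sLambdaClosed μ A) : sLambdaClosed μ (⋂₀ S) := by
  choose K P hK hP hKP using h
  refine ⟨⋂ (A : Set X) (hA : A ∈ S), K A hA, ⋂ (A : Set X) (hA : A ∈ S), P A hA, ?_, ?_, ?_⟩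
  · apply Subset.antisymm (subset_sWedge μ _)
    intro x hx
    refine mem_iInter.2 fun A => mem_iInter.2 fun hA => ?_
    have h1 : (⋂ (A : Set X) (hA : A ∈ S), K A hA) ⊆ K A hA := by
      intro y hy; exact mem_iInter.1 (mem_iInter.1 hy A) hA
    have := sWedge_mono μ h1 hx
    rw [← hK A hA] at this
    exact this
  · exact sClosed_iInter μ fun A => sClosed_iInter μ fun hA => hP A hA
  · ext x
    simp only [mem_sInter, mem_inter_iff, mem_iInter]
    constructor
    · intro hx
      exact ⟨fun A hA => ((hKP A hA ▸ hx A hA) : x ∈ K A hA ∩ P A hA).1,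
             fun A hA => ((hKP A hA ▸ hx A hA) : x ∈ K A hA ∩ P A hA).2⟩
    · intro ⟨h1, h2⟩ A hA
      rw [hKP A hA]
      exact ⟨h1 A hA, h2 A hA⟩

theorem stmt15 (μ : Set (Set X)) (hμ : IsGT μ) (A : Set X) :
    sLambdaClosed μ A ↔ sgClosed μ A ∧ sBetaClosed μ A := by
  constructor
  · intro hA
    constructor
    · intro U hU hAU x hx
      exact hAU (hx A ⟨hA, Subset.rfl⟩)
    · exact ⟨univ, A, Subset.antisymm (fun x _ U hU => hU.2 (mem_univ x)) (subset_univ _),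
        hA, by simp⟩
  · rintro ⟨hg, H, Q, hH, hQ, rfl⟩
    have hsub : sclL μ (H ∩ Q) ⊆ H ∩ Q := by
      intro x hx
      constructor
      · rw [hH]
        intro U hU
        exact hg U hU.1 (inter_subset_left.trans hU.2) hx
      · exact hx Q ⟨hQ, inter_subset_right⟩
    have heq : H ∩ Q = sclL μ (H ∩ Q) := by
      apply Subset.antisymm _ hsub
      intro x hx F hF
      exact hF.2 hx
    rw [heq]
    exact sLambdaClosed_sInter μ fun F hF => hF.1
end
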